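/- Let H be a real Hilbert space, let A, B ⊆ H be nonempty closed convex sets, let α, β ∈ (0, 1), let q ∈ H, and let x₀ ∈ H. Define x_{n+1} = T_{A−q,B−q,α,β}(x_n) for n ≥ 0. Suppose that either H is finite-dimensional, or the interior of A is nonempty, or the interior of B is nonempty. Then the sequence (x_n − x_{n+1}) converges in norm to 2αβ v, where v is the projection of 0 onto the closure of the Minkowski difference A − B = {a − b : a ∈ A, b ∈ B}. -/

import Mathlib

/-!
Write `P`, `Q` for the projections onto `A - q` and `B - q`. The AAMR operator is
`T = (1 - α) I + α N` with `N = (2βQ - I) ∘ (2βP - I)` nonexpansive, so `T` is averaged, and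
`z - T z = 2αβ (P z - Q (2β P z - z))` is `2αβ` times a vector of `A - B`.

Along an orbit of an averaged map, `‖x n - x (n + 1)‖` decreases to the minimal displacement
`⨅ z, ‖z - T z‖`: compared with the orbit of any `z`, the squared differences of the
displacements have a telescoping, hence bounded, sum. For the AAMR operator this infimum is
`2αβ ‖v‖`. Given `w ∈ A - B` and `μ > 0`, project `(2 - 2β)⁻¹ w` onto
`A ∩ (B + closedBall w μ)` and split the resulting normal vector by the sum rule for normal cones;
this produces a `z` with `‖P z - Q (2β P z - z)‖ ≤ ‖w‖ + μ`. Inflating `B` by `μ` provides the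
interior point that the sum rule requires, and costs only `μ`.

Finally, vectors of the convex set `closure (A - B)` whose norms tend to the minimal norm `‖v‖`
converge to `v`, by the parallelogram law.
-/

open RealInnerProductSpace Pointwise Filter Topology Metric

section MetricProj

variable {H : Type*} [NormedAddCommGroup H] [InnerProductSpace ℝ H]

def normalCone (C : Set H) (ξ : H) : Set H :=
  {u | ∀ c ∈ C, ⟪u, c - ξ⟫ ≤ 0}

/-- `p` is the nearest point of `C` to `x`, encoded by the variational inequality; the two
notions agree for convex `C` (`isMetricProj_of_forall_norm_sub_le`). -/
def IsMetricProj (C : Set H) (x p : H) : Prop :=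
  p ∈ C ∧ x - p ∈ normalCone C p

lemma smul_mem_normalCone {C : Set H} {ξ u : H} (hu : u ∈ normalCone C ξ) {t : ℝ}
    (ht : 0 ≤ t) : t • u ∈ normalCone C ξ := fun c hc => by
  rw [real_inner_smul_left]
  exact mul_nonpos_of_nonneg_of_nonpos ht (hu c hc)

lemma isMetricProj_of_forall_norm_sub_le {C : Set H} (hC : Convex ℝ C) {x p : H} (hp : p ∈ C)
    (hmin : ∀ c ∈ C, ‖x - p‖ ≤ ‖x - c‖) : IsMetricProj C x p := by
  have : Nonempty C := ⟨⟨p, hp⟩⟩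
  refine ⟨hp, (norm_eq_iInf_iff_real_inner_le_zero hC hp).1 (le_antisymm ?_ ?_)⟩
  · exact le_ciInf fun c => hmin c c.2
  · exact ciInf_le ⟨0, by rintro _ ⟨c, rfl⟩; positivity⟩ (⟨p, hp⟩ : C)

lemma exists_isMetricProj [CompleteSpace H] {C : Set H} (hne : C.Nonempty) (hcl : IsClosed C)
    (hC : Convex ℝ C) (x : H) : ∃ p, IsMetricProj C x p := by
  obtain ⟨p, hp, hmin⟩ := exists_norm_eq_iInf_of_complete_convex hne hcl.isComplete hC x
  exact ⟨p, hp, (norm_eq_iInf_iff_real_inner_le_zero hC hp).1 hmin⟩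

namespace IsMetricProj

variable {C : Set H} {x y p p' : H}

lemma norm_sub_le_norm_sub (h : IsMetricProj C x p) {c : H} (hc : c ∈ C) :
    ‖x - p‖ ≤ ‖x - c‖ := by
  have hsq : ‖x - c‖ ^ 2 = ‖x - p‖ ^ 2 - 2 * ⟪x - p, c - p⟫ + ‖c - p‖ ^ 2 := by
    rw [← norm_sub_sq_real, sub_sub_sub_cancel_right]
  have := h.2 c hc
  nlinarith [norm_nonneg (x - c), norm_nonneg (x - p), sq_nonneg ‖c - p‖]

lemma eq_of_mem (h : IsMetricProj C x p) (hx : x ∈ C) : p = x := by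
  simpa [sub_eq_zero, eq_comm] using h.norm_sub_le_norm_sub hx

lemma norm_sub_sq_le_inner (h : IsMetricProj C x p) (h' : IsMetricProj C y p') :
    ‖p - p'‖ ^ 2 ≤ ⟪x - y, p - p'⟫ := by
  have h₁ := h.2 p' h'.1
  have h₂ := h'.2 p h.1
  have : ⟪x - y, p - p'⟫ - ‖p - p'‖ ^ 2 = -⟪x - p, p' - p⟫ - ⟪y - p', p - p'⟫ := by
    simp only [← real_inner_self_eq_norm_sq, inner_sub_left, inner_sub_right,
      real_inner_comm p p']
    ring
  linarith

lemma unique (h : IsMetricProj C x p) (h' : IsMetricProj C x p') : p = p' := by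
  have := h.norm_sub_sq_le_inner h'
  rw [sub_self, inner_zero_left] at this
  exact sub_eq_zero.1 (norm_eq_zero.1 (pow_eq_zero_iff two_ne_zero |>.1
    (le_antisymm this (sq_nonneg _))))

lemma norm_sub_le (h : IsMetricProj C x p) (h' : IsMetricProj C y p') :
    ‖p - p'‖ ≤ ‖x - y‖ := by
  have := (h.norm_sub_sq_le_inner h').trans (real_inner_le_norm _ _)
  nlinarith [norm_nonneg (p - p'), norm_nonneg (x - y)]

lemma norm_relaxedReflection_sub_le (h : IsMetricProj C x p) (h' : IsMetricProj C y p')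
    {β : ℝ} (hβ₀ : 0 ≤ β) (hβ₁ : β ≤ 1) :
    ‖((2 * β) • p - x) - ((2 * β) • p' - y)‖ ≤ ‖x - y‖ := by
  have hfirm := h.norm_sub_sq_le_inner h'
  have hexp : ‖((2 * β) • p - x) - ((2 * β) • p' - y)‖ ^ 2 =
      4 * β ^ 2 * ‖p - p'‖ ^ 2 - 4 * β * ⟪x - y, p - p'⟫ + ‖x - y‖ ^ 2 := by
    rw [show ((2 * β) • p - x) - ((2 * β) • p' - y) = (2 * β) • (p - p') - (x - y) by module,
      norm_sub_sq_real, real_inner_smul_left, norm_smul, real_inner_comm, Real.norm_eq_abs,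
      abs_of_nonneg (by positivity)]
    ring
  refine pow_le_pow_iff_left₀ (norm_nonneg _) (norm_nonneg _) two_ne_zero |>.1 ?_
  nlinarith [mul_nonneg (mul_nonneg hβ₀ (sub_nonneg.2 hβ₁)) (sq_nonneg ‖p - p'‖)]

end IsMetricProj

section

variable {C : Set H} {P : H → H} (hP : ∀ x, IsMetricProj C x (P x))
include hP

lemma lipschitzWith_one_of_isMetricProj : LipschitzWith 1 P :=
  LipschitzWith.of_dist_le_mul fun x y => by
    simpa [dist_eq_norm] using (hP x).norm_sub_le (hP y)

lemma isClosed_of_isMetricProj : IsClosed C := by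
  have : C = {x | P x = x} :=
    Set.ext fun x => ⟨fun hx => (hP x).eq_of_mem hx, fun hx => hx ▸ (hP x).1⟩
  rw [this]
  exact isClosed_eq (lipschitzWith_one_of_isMetricProj hP).continuous continuous_id

lemma lipschitzWith_relaxedReflection {β : ℝ} (hβ₀ : 0 ≤ β) (hβ₁ : β ≤ 1) :
    LipschitzWith 1 fun x => (2 * β) • P x - x :=
  LipschitzWith.of_dist_le_mul fun x y => by
    simpa [dist_eq_norm] using (hP x).norm_relaxedReflection_sub_le (hP y) hβ₀ hβ₁

lemma isClosed_add_closedBall (c : H) (μ : ℝ) : IsClosed (C + closedBall c μ) := by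
  have : C + closedBall c μ = {z | ‖z - c - P (z - c)‖ ≤ μ} := by
    ext z
    simp only [Set.mem_add, mem_closedBall, dist_eq_norm, Set.mem_ofPred_eq]
    constructor
    · rintro ⟨b, hb, h, hh, rfl⟩
      calc ‖b + h - c - P (b + h - c)‖ ≤ ‖b + h - c - b‖ := (hP _).norm_sub_le_norm_sub hb
        _ = ‖h - c‖ := by congr 1; abel
        _ ≤ μ := hh
    · intro hz
      exact ⟨P (z - c), (hP _).1, z - P (z - c), by rwa [sub_right_comm], by abel⟩
  rw [this]
  have := (lipschitzWith_one_of_isMetricProj hP).continuous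
  exact isClosed_le (by fun_prop) continuous_const

end

lemma norm_sub_le_of_isMetricProj_add_closedBall {B : Set H} {y p c η : H} {μ : ℝ}
    (hp : IsMetricProj B y p) (hη : IsMetricProj (B + closedBall c μ) (y + c) η) :
    ‖η - (p + c)‖ ≤ μ := by
  set e := y + c - η
  set f := η - (p + c)
  obtain ⟨b, hb, h, hh, hbh⟩ := hη.1
  rw [mem_closedBall, dist_eq_norm] at hh
  replace hbh : b + h = η := hbh
  have hμ : 0 ≤ μ := (norm_nonneg _).trans hh
  have hef : μ * ‖e‖ ≤ ⟪e, f⟫ := by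
    have hmem : p + (c + μ • ‖e‖⁻¹ • e) ∈ B + closedBall c μ := by
      refine ⟨p, hp.1, c + μ • ‖e‖⁻¹ • e, ?_, rfl⟩
      rw [mem_closedBall, dist_eq_norm, add_sub_cancel_left, norm_smul, norm_smul,
        norm_inv, norm_norm, Real.norm_of_nonneg hμ]
      exact mul_le_of_le_one_right hμ (inv_mul_le_one_of_le₀ le_rfl (norm_nonneg _))
    have := hη.2 _ hmem
    rw [show p + (c + μ • ‖e‖⁻¹ • e) - η = μ • ‖e‖⁻¹ • e - f by simp only [f]; abel,
      inner_sub_right, real_inner_smul_right, real_inner_smul_right, real_inner_self_eq_norm_sq,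
      inv_mul_eq_div, sq, mul_self_div_self] at this
    linarith
  have hfg : ⟪e + f, f⟫ ≤ μ * (‖e‖ + ‖f‖) := by
    have := hp.2 b hb
    rw [show y - p = e + f by simp only [e, f]; abel,
      show b - p = f - (h - c) by simp only [f]; rw [← hbh]; abel, inner_sub_right] at this
    calc ⟪e + f, f⟫ ≤ ⟪e + f, h - c⟫ := by linarith
      _ ≤ ‖e + f‖ * ‖h - c‖ := real_inner_le_norm _ _
      _ ≤ (‖e‖ + ‖f‖) * μ := by gcongr; exact norm_add_le _ _
      _ = μ * (‖e‖ + ‖f‖) := mul_comm _ _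
  rw [inner_add_left, real_inner_self_eq_norm_sq] at hfg
  nlinarith [norm_nonneg f]

lemma tendsto_of_tendsto_norm_of_forall_norm_le {C : Set H} (hC : Convex ℝ C) {v : H}
    (hv : v ∈ C) (hmin : ∀ w ∈ C, ‖v‖ ≤ ‖w‖) {ι : Type*} {l : Filter ι} {k : ι → H}
    (hk : ∀ i, k i ∈ C) (hlim : Tendsto (fun i => ‖k i‖) l (𝓝 ‖v‖)) : Tendsto k l (𝓝 v) := by
  have hpar : ∀ i, ‖k i - v‖ ^ 2 ≤ 2 * ‖k i‖ ^ 2 - 2 * ‖v‖ ^ 2 := fun i => by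
    have hmid := hmin _ (hC (hk i) hv (by norm_num : (0 : ℝ) ≤ 1 / 2)
      (by norm_num : (0 : ℝ) ≤ 1 / 2) (by norm_num))
    rw [← smul_add, norm_smul, Real.norm_of_nonneg (by norm_num)] at hmid
    have := parallelogram_law_with_norm ℝ (k i) v
    nlinarith [norm_nonneg v]
  have h0 : Tendsto (fun i => 2 * ‖k i‖ ^ 2 - 2 * ‖v‖ ^ 2) l (𝓝 0) := by
    convert ((hlim.pow 2).const_mul 2).sub_const (2 * ‖v‖ ^ 2) using 2
    ring
  have := (squeeze_zero (fun i => sq_nonneg _) hpar h0).sqrt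
  rw [tendsto_iff_norm_sub_tendsto_zero]
  simpa [Real.sqrt_sq (norm_nonneg _)] using this

end MetricProj

section NormalCone

variable {H : Type*} [NormedAddCommGroup H] [InnerProductSpace ℝ H] [CompleteSpace H]

lemma exists_inner_add_mul_lt_le {O D : Set (H × ℝ)} (hOc : Convex ℝ O)
    (hOo : IsOpen O) (hD : Convex ℝ D) (hdisj : Disjoint O D) :
    ∃ (ψ : H) (γ r : ℝ), (∀ p ∈ O, ⟪ψ, p.1⟫ + p.2 * γ < r) ∧
      ∀ p ∈ D, r ≤ ⟪ψ, p.1⟫ + p.2 * γ := by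
  obtain ⟨f, r, hO, hD⟩ := geometric_hahn_banach_open hOc hOo hD hdisj
  set ψ := (InnerProductSpace.toDual ℝ H).symm (f.comp (.inl ℝ H ℝ))
  have hf : ∀ p : H × ℝ, f p = ⟪ψ, p.1⟫ + p.2 * f (0, 1) := fun p => by
    rw [InnerProductSpace.toDual_symm_apply]
    calc f p = f ((p.1, 0) + p.2 • ((0 : H), (1 : ℝ))) := by congr 1; ext <;> simp
      _ = _ := by rw [map_add, map_smul, smul_eq_mul]; rfl
  exact ⟨ψ, f (0, 1), r, fun p hp => hf p ▸ hO p hp, fun p hp => hf p ▸ hD p hp⟩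

/-- Separate `interior S₂ ×ˢ Ioi 0` from the hypograph of `c ↦ ⟪u, c - ξ⟫` over `S₁`; the
separating functional, rescaled so that its `ℝ`-component is `-1`, gives the `S₂`-part of `u`. -/
lemma normalCone_inter_subset_add {S₁ S₂ : Set H} (h₁ : Convex ℝ S₁)
    (h₂ : Convex ℝ S₂) {ξ : H} (hξ₁ : ξ ∈ S₁) (hξ₂ : ξ ∈ S₂)
    (hint : (S₁ ∩ interior S₂).Nonempty) :
    normalCone (S₁ ∩ S₂) ξ ⊆ normalCone S₁ ξ + normalCone S₂ ξ := by
  intro u hu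
  obtain ⟨s₀, hs₀₁, hs₀₂⟩ := hint
  have hhypo : Convex ℝ {p : H × ℝ | p.1 ∈ S₁ ∧ p.2 ≤ ⟪u, p.1 - ξ⟫} := by
    have := (((innerₛₗ ℝ u).concaveOn h₁).add_const (-⟪u, ξ⟫)).convex_hypograph
    simpa only [Pi.add_apply, innerₛₗ_apply_apply, ← sub_eq_add_neg, ← inner_sub_right] using this
  have hdisj : Disjoint (interior S₂ ×ˢ Set.Ioi (0 : ℝ))
      {p : H × ℝ | p.1 ∈ S₁ ∧ p.2 ≤ ⟪u, p.1 - ξ⟫} := by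
    refine Set.disjoint_left.2 fun p ⟨hp₂, hpos⟩ ⟨hp₁, hle⟩ => ?_
    have := hu p.1 ⟨hp₁, interior_subset hp₂⟩
    exact absurd (hle.trans this) (not_le.2 hpos)
  obtain ⟨ψ, γ, r, hO, hD⟩ := exists_inner_add_mul_lt_le (h₂.interior.prod (convex_Ioi 0))
    (isOpen_interior.prod isOpen_Ioi) hhypo hdisj
  have hS₂ : ∀ d ∈ S₂, ⟪ψ, d⟫ ≤ r := by
    have hinterior : ∀ d ∈ interior S₂, ⟪ψ, d⟫ ≤ r := fun d hd =>
      le_of_tendsto (x := 𝓝[>] 0) (f := fun t : ℝ => ⟪ψ, d⟫ + t * γ)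
        ((Continuous.tendsto' (by fun_prop) 0 _ (by simp)).mono_left nhdsWithin_le_nhds)
        (eventually_nhdsWithin_of_forall fun t ht => (hO (d, t) ⟨hd, ht⟩).le)
    have hcl : closure (interior S₂) ⊆ {d | ⟪ψ, d⟫ ≤ r} :=
      closure_minimal hinterior (isClosed_le (by fun_prop) continuous_const)
    rw [h₂.closure_interior_eq_closure_of_nonempty_interior ⟨s₀, hs₀₂⟩] at hcl
    exact fun d hd => hcl (subset_closure hd)
  have hrξ : r ≤ ⟪ψ, ξ⟫ := by simpa using hD (ξ, 0) ⟨hξ₁, by simp⟩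
  have hγ : γ < 0 := by
    have h₁ := hO (s₀, 1) ⟨hs₀₂, by norm_num⟩
    have h₂ := hD (s₀, ⟪u, s₀ - ξ⟫) ⟨hs₀₁, le_rfl⟩
    have h₃ := hu s₀ ⟨hs₀₁, interior_subset hs₀₂⟩
    simp only at h₁ h₂
    nlinarith
  refine ⟨u - (-γ)⁻¹ • ψ, fun c hc => ?_, (-γ)⁻¹ • ψ, fun d hd => ?_, sub_add_cancel _ _⟩
  · have h := hD (c, ⟪u, c - ξ⟫) ⟨hc, le_rfl⟩
    have hψ : -γ * ⟪u, c - ξ⟫ ≤ ⟪ψ, c - ξ⟫ := by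
      simp only at h
      linarith [hS₂ ξ hξ₂, inner_sub_right (𝕜 := ℝ) ψ c ξ]
    rwa [inner_sub_left, real_inner_smul_left, sub_nonpos, le_inv_mul_iff₀ (neg_pos.2 hγ)]
  · rw [real_inner_smul_left, inner_sub_right]
    exact mul_nonpos_of_nonneg_of_nonpos (by simp [hγ.le]) (by linarith [hS₂ d hd])


end NormalCone

section Averaged

variable {E : Type*} [SeminormedAddCommGroup E]

/-- In the usual terminology, `T` is `α`-averaged iff `IsAveraged ((1 - α) / α) T`. -/
def IsAveraged (c : ℝ) (T : E → E) : Prop :=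
  ∀ x y, c * ‖(x - T x) - (y - T y)‖ ^ 2 ≤ ‖x - y‖ ^ 2 - ‖T x - T y‖ ^ 2

namespace IsAveraged

variable {T : E → E} {c : ℝ} (hT : IsAveraged c T)
include hT

lemma norm_sub_le (hc : 0 ≤ c) (x y : E) : ‖T x - T y‖ ≤ ‖x - y‖ := by
  refine pow_le_pow_iff_left₀ (norm_nonneg _) (norm_nonneg _) two_ne_zero |>.1 ?_
  nlinarith [hT x y, mul_nonneg hc (sq_nonneg ‖(x - T x) - (y - T y)‖)]

variable {x : ℕ → E} (hx : ∀ n, x (n + 1) = T (x n))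
include hx

lemma antitone_norm_sub_succ (hc : 0 ≤ c) : Antitone fun n => ‖x n - x (n + 1)‖ :=
  antitone_nat_of_succ_le fun n => by
    rw [hx (n + 1), hx n]
    exact hT.norm_sub_le hc _ _

lemma tendsto_sub_succ_sub_sub_succ (hc : 0 < c) {y : ℕ → E}
    (hy : ∀ n, y (n + 1) = T (y n)) :
    Tendsto (fun n => (x n - x (n + 1)) - (y n - y (n + 1))) atTop (𝓝 0) := by
  have hsum : Summable fun n => c * ‖(x n - x (n + 1)) - (y n - y (n + 1))‖ ^ 2 := by
    refine summable_of_sum_range_le (c := ‖x 0 - y 0‖ ^ 2) (fun n => by positivity) fun n => ?_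
    calc _ ≤ ∑ i ∈ Finset.range n, (‖x i - y i‖ ^ 2 - ‖x (i + 1) - y (i + 1)‖ ^ 2) :=
          Finset.sum_le_sum fun i _ => by rw [hx i, hy i]; exact hT _ _
      _ = ‖x 0 - y 0‖ ^ 2 - ‖x n - y n‖ ^ 2 := Finset.sum_range_sub' _ n
      _ ≤ _ := sub_le_self _ (sq_nonneg _)
  have := (hsum.tendsto_atTop_zero.const_mul c⁻¹).sqrt
  rw [tendsto_zero_iff_norm_tendsto_zero]
  simpa [← mul_assoc, inv_mul_cancel₀ hc.ne', Real.sqrt_sq (norm_nonneg _)] using this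

lemma tendsto_norm_sub_succ_iInf (hc : 0 < c) :
    Tendsto (fun n => ‖x n - x (n + 1)‖) atTop (𝓝 (⨅ z, ‖z - T z‖)) := by
  have hbdd : BddBelow (Set.range fun n => ‖x n - x (n + 1)‖) :=
    ⟨0, by rintro _ ⟨n, rfl⟩; positivity⟩
  convert tendsto_atTop_ciInf (hT.antitone_norm_sub_succ hx hc.le) hbdd using 2
  refine le_antisymm (le_ciInf fun n => hx n ▸ ciInf_le ⟨0, ?_⟩ (x n)) (le_ciInf fun z => ?_)
  · rintro _ ⟨z, rfl⟩; positivity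
  set y := fun n => T^[n] z
  have hy : ∀ n, y (n + 1) = T (y n) := fun n => Function.iterate_succ_apply' T n z
  have hd := hT.tendsto_sub_succ_sub_sub_succ hx hc hy
  refine ge_of_tendsto' (by simpa using hd.norm.const_add ‖z - T z‖) fun n => ?_
  calc ⨅ m, ‖x m - x (m + 1)‖ ≤ ‖x n - x (n + 1)‖ := ciInf_le hbdd n
    _ ≤ ‖y n - y (n + 1)‖ + ‖(x n - x (n + 1)) - (y n - y (n + 1))‖ :=
      norm_le_norm_add_norm_sub' _ _
    _ ≤ ‖z - T z‖ + ‖(x n - x (n + 1)) - (y n - y (n + 1))‖ := by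
      gcongr
      exact hT.antitone_norm_sub_succ hy hc.le (Nat.zero_le n)

end IsAveraged

end Averaged

section AAMR

variable {H : Type*} [NormedAddCommGroup H] [InnerProductSpace ℝ H]

lemma norm_one_sub_smul_add_smul_sq (a b : H) (t : ℝ) :
    ‖(1 - t) • a + t • b‖ ^ 2 =
      (1 - t) * ‖a‖ ^ 2 + t * ‖b‖ ^ 2 - t * (1 - t) * ‖a - b‖ ^ 2 := by
  rw [norm_add_sq_real, norm_sub_sq_real, norm_smul, norm_smul, real_inner_smul_left,
    real_inner_smul_right, mul_pow, mul_pow, Real.norm_eq_abs, Real.norm_eq_abs, sq_abs, sq_abs]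
  ring

lemma isAveraged_of_lipschitzWith_one {N T : H → H} (hN : LipschitzWith 1 N) {α : ℝ}
    (hα : 0 < α) (hT : ∀ x, T x = (1 - α) • x + α • N x) : IsAveraged ((1 - α) / α) T := by
  intro x y
  have hN' : ‖N x - N y‖ ≤ ‖x - y‖ := by simpa using hN.norm_sub_le x y
  have h₁ : T x - T y = (1 - α) • (x - y) + α • (N x - N y) := by rw [hT, hT]; module
  have h₂ : (x - T x) - (y - T y) = α • ((x - y) - (N x - N y)) := by rw [hT, hT]; module
  have h₃ : (1 - α) / α * (α ^ 2 * ‖x - y - (N x - N y)‖ ^ 2) =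
      α * (1 - α) * ‖x - y - (N x - N y)‖ ^ 2 := by
    field_simp
  rw [h₁, h₂, norm_one_sub_smul_add_smul_sq, norm_smul, mul_pow, Real.norm_of_nonneg hα.le, h₃]
  nlinarith [pow_le_pow_left₀ (norm_nonneg _) hN' 2]

/-- For the AAMR operator `T`, `z - T z = (2 * α * β) • aamrGap P Q β z`. -/
def aamrGap (P Q : H → H) (β : ℝ) (z : H) : H :=
  P z - Q ((2 * β) • P z - z)

variable {A B : Set H} {P Q : H → H} (hP : ∀ x, IsMetricProj A x (P x))
  (hQ : ∀ x, IsMetricProj B x (Q x)) {β : ℝ}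
include hP hQ

lemma aamrGap_mem_sub (z : H) : aamrGap P Q β z ∈ A - B :=
  Set.sub_mem_sub (hP z).1 (hQ _).1

variable [CompleteSpace H] (hA : Convex ℝ A) (hB : Convex ℝ B) (hβ : β < 1)
include hA hB hβ

lemma exists_norm_aamrGap_le {w : H} (hw : w ∈ A - B) {μ : ℝ} (hμ : 0 < μ) :
    ∃ z, ‖aamrGap P Q β z‖ ≤ ‖w‖ + μ := by
  obtain ⟨a, ha, b, hb, rfl⟩ := hw
  set S := B + closedBall (a - b) μ
  have hS : Convex ℝ S := hB.add (convex_closedBall _ _)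
  have haS : a ∈ interior S := by
    refine mem_interior_iff_mem_nhds.2 (Filter.mem_of_superset (ball_mem_nhds a hμ) ?_)
    intro e he
    refine ⟨b, hb, e - b, ?_, add_sub_cancel b e⟩
    rw [mem_closedBall, dist_eq_norm, sub_sub_sub_cancel_right, ← dist_eq_norm]
    exact (mem_ball.1 he).le
  have hκ : 0 < 2 - 2 * β := by linarith
  obtain ⟨ξ, hξ⟩ := exists_isMetricProj (C := A ∩ S) ⟨a, ha, interior_subset haS⟩
    ((isClosed_of_isMetricProj hP).inter (isClosed_add_closedBall hQ _ _)) (hA.inter hS)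
    ((2 - 2 * β)⁻¹ • (a - b))
  obtain ⟨u₁, hu₁, u₂, hu₂, hu⟩ := normalCone_inter_subset_add hA hS hξ.1.1 hξ.1.2
    (show (A ∩ interior S).Nonempty from ⟨a, ha, haS⟩) (smul_mem_normalCone hξ.2 hκ.le)
  have hPz : P (ξ + u₁) = ξ := (hP _).unique ⟨hξ.1.1, by rwa [add_sub_cancel_left]⟩
  have hy : IsMetricProj S ((2 * β) • ξ - (ξ + u₁) + (a - b)) ξ := by
    refine ⟨hξ.1.2, ?_⟩
    rw [eq_sub_of_add_eq' hu, smul_sub, smul_smul, mul_inv_cancel₀ hκ.ne', one_smul] at hu₂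
    convert hu₂ using 1
    module
  refine ⟨ξ + u₁, ?_⟩
  rw [aamrGap, hPz]
  have := norm_sub_le_of_isMetricProj_add_closedBall (hQ _) hy
  calc ‖ξ - Q ((2 * β) • ξ - (ξ + u₁))‖
      = ‖(a - b) + (ξ - (Q ((2 * β) • ξ - (ξ + u₁)) + (a - b)))‖ := by congr 1; abel
    _ ≤ ‖a - b‖ + μ := (norm_add_le _ _).trans (by gcongr)

lemma iInf_norm_aamrGap_eq {v : H} (hv : v ∈ closure (A - B) ∧ ∀ w ∈ closure (A - B), ‖v‖ ≤ ‖w‖) :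
    ⨅ z, ‖aamrGap P Q β z‖ = ‖v‖ := by
  have hbdd : BddBelow (Set.range fun z => ‖aamrGap P Q β z‖) :=
    ⟨0, by rintro _ ⟨z, rfl⟩; positivity⟩
  refine le_antisymm ?_
    (le_ciInf fun z => hv.2 _ (subset_closure (aamrGap_mem_sub hP hQ z)))
  have hsub : A - B ⊆ {w | ⨅ z, ‖aamrGap P Q β z‖ ≤ ‖w‖} := fun w hw =>
    le_of_forall_pos_le_add fun μ hμ =>
      let ⟨z, hz⟩ := exists_norm_aamrGap_le hP hQ hA hB hβ hw hμ
      (ciInf_le hbdd z).trans hz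
  exact closure_minimal hsub (isClosed_le continuous_const continuous_norm) hv.1

end AAMR

theorem stmt_18_general {H : Type*} [NormedAddCommGroup H] [InnerProductSpace ℝ H] [CompleteSpace H]
    (A B : Set H) (hAv : Convex ℝ A) (hBv : Convex ℝ B)
    (α β : ℝ) (hα : α ∈ Set.Ioo (0 : ℝ) 1) (hβ : β ∈ Set.Ioo (0 : ℝ) 1)
    (q : H)
    (PAq PBq : H → H)
    (hPAq : ∀ x, PAq x ∈ A - {q} ∧ ∀ c ∈ A - {q}, ‖x - PAq x‖ ≤ ‖x - c‖)
    (hPBq : ∀ x, PBq x ∈ B - {q} ∧ ∀ c ∈ B - {q}, ‖x - PBq x‖ ≤ ‖x - c‖)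
    (T : H → H)
    (hT : ∀ x, T x =
      (1 - α) • x + α • ((2 * β) • PBq ((2 * β) • PAq x - x) - ((2 * β) • PAq x - x)))
    (x : ℕ → H) (hrec : ∀ n, x (n + 1) = T (x n))
    (v : H) (hv : v ∈ closure (A - B) ∧ ∀ w ∈ closure (A - B), ‖v‖ ≤ ‖w‖) :
    Tendsto (fun n => x n - x (n + 1)) atTop (nhds ((2 * α * β) • v)) := by
  obtain ⟨hα₀, hα₁⟩ := hα
  obtain ⟨hβ₀, hβ₁⟩ := hβ
  have hAq := hAv.sub (convex_singleton q)
  have hBq := hBv.sub (convex_singleton q)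
  have hP : ∀ z, IsMetricProj (A - {q}) z (PAq z) := fun z =>
    isMetricProj_of_forall_norm_sub_le hAq (hPAq z).1 (hPAq z).2
  have hQ : ∀ z, IsMetricProj (B - {q}) z (PBq z) := fun z =>
    isMetricProj_of_forall_norm_sub_le hBq (hPBq z).1 (hPBq z).2
  have hsets : A - {q} - (B - {q}) = A - B := by rw [sub_sub_sub_comm]; simp
  have hκ : 0 < 2 * α * β := by positivity
  have hdisp : ∀ z, z - T z = (2 * α * β) • aamrGap PAq PBq β z := fun z => by
    rw [hT, aamrGap]; module
  have hN := (lipschitzWith_relaxedReflection hQ hβ₀.le hβ₁.le).comp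
    (lipschitzWith_relaxedReflection hP hβ₀.le hβ₁.le)
  rw [mul_one] at hN
  have hlim := (isAveraged_of_lipschitzWith_one hN hα₀ hT).tendsto_norm_sub_succ_iInf hrec
    (div_pos (sub_pos.2 hα₁) hα₀)
  simp_rw [hrec, hdisp, norm_smul, Real.norm_of_nonneg hκ.le, ← Real.mul_iInf_of_nonneg hκ.le,
    iInf_norm_aamrGap_eq hP hQ hAq hBq hβ₁ (hsets ▸ hv)] at hlim
  have hgap := tendsto_of_tendsto_norm_of_forall_norm_le (hAv.sub hBv).closure hv.1 hv.2
    (fun n => subset_closure (hsets ▸ aamrGap_mem_sub hP hQ (x n)))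
    (by simpa only [inv_mul_cancel_left₀ hκ.ne'] using hlim.const_mul (2 * α * β)⁻¹)
  simpa only [hrec, hdisp] using hgap.const_smul (2 * α * β)

/-- If `H` is finite-dimensional, or `int A ≠ ∅`, or `int B ≠ ∅`, then
the AAMR iterates `x_{n+1} = T_{A−q,B−q,α,β}(x_n)` satisfy
`x_n − x_{n+1} → 2αβ v` in norm, where `v = P_{cl(A−B)}(0)`. -/
theorem stmt_18 {H : Type*} [NormedAddCommGroup H] [InnerProductSpace ℝ H] [CompleteSpace H]
    (A B : Set H) (hAne : A.Nonempty) (hAc : IsClosed A) (hAv : Convex ℝ A)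
    (hBne : B.Nonempty) (hBc : IsClosed B) (hBv : Convex ℝ B)
    (α β : ℝ) (hα : α ∈ Set.Ioo (0 : ℝ) 1) (hβ : β ∈ Set.Ioo (0 : ℝ) 1)
    (q : H)
    (PAq PBq : H → H)
    (hPAq : ∀ x, PAq x ∈ A - {q} ∧ ∀ c ∈ A - {q}, ‖x - PAq x‖ ≤ ‖x - c‖)
    (hPBq : ∀ x, PBq x ∈ B - {q} ∧ ∀ c ∈ B - {q}, ‖x - PBq x‖ ≤ ‖x - c‖)
    (T : H → H)
    (hT : ∀ x, T x =
      (1 - α) • x + α • ((2 * β) • PBq ((2 * β) • PAq x - x) - ((2 * β) • PAq x - x)))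
    (x : ℕ → H) (hrec : ∀ n, x (n + 1) = T (x n))
    (hcase : FiniteDimensional ℝ H ∨ (interior A).Nonempty ∨ (interior B).Nonempty)
    (v : H) (hv : v ∈ closure (A - B) ∧ ∀ w ∈ closure (A - B), ‖v‖ ≤ ‖w‖) :
    Tendsto (fun n => x n - x (n + 1)) atTop (nhds ((2 * α * β) • v)) :=
  stmt_18_general A B hAv hBv α β hα hβ q PAq PBq hPAq hPBq T hT x hrec v hv
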